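/- In the 4-coloring of a unit veto interval representation where I(v) is colored by the pair of parities (⌊v_l⌋ mod 2, ⌊v_v⌋ mod 2), any two intervals receiving the same color are non-adjacent. -/
import Mathlib


/-- A veto interval: a closed interval `[l, r]` with a veto mark `v`, `l < v < r`. -/
structure VetoInterval where
  l : ℝ
  v : ℝ
  r : ℝ
  hlv : l < v
  hvr : v < r

/-- Two veto intervals are adjacent iff they intersect and neither contains
the veto mark of the other. -/
def VIAdj (a b : VetoInterval) : Prop :=
  (a.v < b.l ∧ b.l < a.r ∧ a.r < b.v) ∨ (b.v < a.l ∧ a.l < b.r ∧ b.r < a.v)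

/-- `G` is a veto interval graph. -/
def IsVIGraph {V : Type*} (G : SimpleGraph V) : Prop :=
  ∃ f : V → VetoInterval, ∀ a b : V, G.Adj a b ↔ VIAdj (f a) (f b)

lemma veto_key (a b : VetoInterval) (ha : a.r = a.l + 1) (hb : b.r = b.l + 1)
    (hcl : ⌊a.l⌋ % 2 = ⌊b.l⌋ % 2) (hcv : ⌊a.v⌋ % 2 = ⌊b.v⌋ % 2)
    (h1 : a.v < b.l) (h2 : b.l < a.r) (h3 : a.r < b.v) : False := by
  have hla := a.hlv
  have hvb := b.hvr
  have f1 : ⌊a.l⌋ ≤ ⌊b.l⌋ := Int.floor_le_floor (le_of_lt (lt_trans hla h1))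
  have f2 : ⌊b.l⌋ ≤ ⌊a.l⌋ + 1 := by
    have h : b.l ≤ a.l + 1 := by linarith [ha ▸ h2]
    have := Int.floor_le_floor h
    rwa [Int.floor_add_one] at this
  have f3 : ⌊a.l⌋ ≤ ⌊a.v⌋ := Int.floor_le_floor hla.le
  have f4 : ⌊a.v⌋ ≤ ⌊b.l⌋ := Int.floor_le_floor h1.le
  have f5 : ⌊a.l⌋ + 1 ≤ ⌊b.v⌋ := by
    have h : (⌊a.l⌋ : ℝ) + 1 ≤ b.v := by
      have := Int.floor_le a.l
      linarith [ha ▸ h3]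
    have : ((⌊a.l⌋ + 1 : ℤ) : ℝ) ≤ b.v := by push_cast; linarith
    exact Int.le_floor.2 this
  have f6 : ⌊b.v⌋ ≤ ⌊b.l⌋ + 1 := by
    have h : b.v ≤ b.l + 1 := by linarith [hb ▸ hvb]
    have := Int.floor_le_floor h
    rwa [Int.floor_add_one] at this
  omega

/-- In the 4-coloring of a unit veto interval representation by the pair of
parities `(⌊v_l⌋ mod 2, ⌊v_v⌋ mod 2)`, any two intervals receiving the same
color are non-adjacent. (All marked points are assumed distinct.) -/
theorem stmt_12 (a b : VetoInterval)
    (ha : a.r = a.l + 1) (hb : b.r = b.l + 1)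
    (hdistinct : ([a.l, a.v, a.r, b.l, b.v, b.r] : List ℝ).Pairwise (· ≠ ·))
    (hcl : ⌊a.l⌋ % 2 = ⌊b.l⌋ % 2) (hcv : ⌊a.v⌋ % 2 = ⌊b.v⌋ % 2) :
    ¬ VIAdj a b := by
  rintro (⟨h1, h2, h3⟩ | ⟨h1, h2, h3⟩)
  · exact veto_key a b ha hb hcl hcv h1 h2 h3
  · exact veto_key b a hb ha hcl.symm hcv.symm h1 h2 h3
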